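/- Let f, g ∈ End^0(G). If the pair (f,g) is fixed point free, then the connected component of the multigraph Γ_{f,g} containing the vertex 0 is a tree, and in each of the other connected components of Γ_{f,g} the number of edges (each of the n edges, including loops, counted once) equals the number of vertices. -/

import Mathlib

/-!
STATEMENT 4: Let `f, g ∈ End⁰(G)`.  If `(f, g)` is fixed point free, then the
connected component of the multigraph `Γ_{f,g}` containing the vertex `0` is a
tree, and in each of the other connected components of `Γ_{f,g}` the number of
edges equals the number of vertices.

Setting: `n ≥ 1`, `T` a nontrivial finite group, `G = Tⁿ = (Fin n → T)`.
The vertex set `{0, 1, …, n}` is modelled by `Option (Fin n)`, with `none`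
the distinguished vertex `0`.  See the definitions below: `Γ_{f,g}` is the
multigraph whose `i`-th edge joins `θ_f(i)` and `θ_g(i)`.  A connected
component is a tree iff (it is connected and) no cycle lies inside it; the
edges of the component of a vertex `a` are those edges both of whose ends are
reachable from `a`, and its vertices are those reachable from `a`.
-/

/-- Adjacency in the multigraph whose `i`-th edge has ends `ends i`. -/
def MGraph.Adj {V : Type*} {n : ℕ} (ends : Fin n → Sym2 V) (a b : V) : Prop :=
  ∃ i, ends i = s(a, b)

/-- Two vertices are joined by a walk. -/
def MGraph.Reach {V : Type*} {n : ℕ} (ends : Fin n → Sym2 V) : V → V → Prop :=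
  Relation.ReflTransGen (MGraph.Adj ends)

/-- The multigraph has a cycle all of whose vertices satisfy the predicate
`P`: for some `m`, there are `m + 1` pairwise distinct edges and `m + 1`
pairwise distinct vertices `v 0, …, v m` with the `k`-th edge joining `v k`
and `v (k+1)` (cyclically), each `v k` satisfying `P`.  (`m = 0` detects a
loop, `m = 1` a pair of parallel edges.) -/
def MGraph.HasCycleWithin {V : Type*} {n : ℕ} (ends : Fin n → Sym2 V)
    (P : V → Prop) : Prop :=
  ∃ (m : ℕ) (e : Fin (m + 1) → Fin n) (v : Fin (m + 1) → V),
    Function.Injective e ∧ Function.Injective v ∧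
      (∀ k : Fin (m + 1), ends (e k) = s(v k, v (k + 1))) ∧
      ∀ k : Fin (m + 1), P (v k)

/-- The connected component of the vertex `a` is a tree: it is connected (any
two of its vertices are joined by a walk) and contains no cycle. -/
def MGraph.ComponentIsTree {V : Type*} {n : ℕ} (ends : Fin n → Sym2 V)
    (a : V) : Prop :=
  (∀ b c : V, MGraph.Reach ends a b → MGraph.Reach ends a c →
    MGraph.Reach ends b c) ∧
  ¬ MGraph.HasCycleWithin ends (MGraph.Reach ends a)

/-- `(θ, φ)` witnesses that `f` lies in `End⁰(G)`. -/
def End0Data {n : ℕ} {T : Type*} [Group T] (θ : Fin n → Option (Fin n))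
    (φ : Fin n → (T →* T)) (f : (Fin n → T) →* (Fin n → T)) : Prop :=
  (∀ i, (θ i).isSome → Function.Bijective (φ i)) ∧
    ∀ (x : Fin n → T) (i : Fin n), f x i = (θ i).elim 1 fun j => φ i (x j)

/-!
The component `C` of any vertex `a` carries a breadth-first spanning tree whose parent edges
inject `C \ {a}` into the edges of `C`, so `|V(C)| ≤ |E(C)| + 1`; when equality holds every edge
of `C` is a parent edge, and a vertex of maximal depth on a cycle would have two distinct parent
edges, so `C` is acyclic. If a component avoiding `0` were such a tree, every edge equation
`φ_f i (σ (θ_f i)) = φ_g i (σ (θ_g i))` inside it would involve two isomorphisms, so a value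
`t ≠ 1` at the root could be propagated along the parent edges to a nontrivial fixed point.
Hence `|V(C)| ≤ |E(C)|` for every component not containing `0`; as there are `n + 1` vertices
and `n` edges in total, all these inequalities are equalities and the component of `0` has
`|V(C)| = |E(C)| + 1`.
-/

lemma Finset.eq_add_one_and_eq_of_sum_eq_sum_add_one {ι : Type*} [DecidableEq ι]
    {s : Finset ι} {f g : ι → ℕ} {i₀ : ι} (hi₀ : i₀ ∈ s)
    (hsum : ∑ i ∈ s, f i = ∑ i ∈ s, g i + 1) (h₀ : f i₀ ≤ g i₀ + 1)
    (h : ∀ i ∈ s, i ≠ i₀ → f i ≤ g i) :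
    f i₀ = g i₀ + 1 ∧ ∀ i ∈ s, i ≠ i₀ → f i = g i := by
  rw [← Finset.add_sum_erase s f hi₀, ← Finset.add_sum_erase s g hi₀] at hsum
  have hle : ∀ i ∈ s.erase i₀, f i ≤ g i :=
    fun i hi => h i (Finset.mem_of_mem_erase hi) (Finset.ne_of_mem_erase hi)
  have hrest := Finset.sum_le_sum hle
  have heq : ∑ i ∈ s.erase i₀, f i = ∑ i ∈ s.erase i₀, g i := by omega
  exact ⟨by omega, fun i hi hne =>
    (Finset.sum_eq_sum_iff_of_le hle).1 heq i (Finset.mem_erase.2 ⟨hne, hi⟩)⟩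

namespace MGraph

variable {V : Type*} {n : ℕ} {ends : Fin n → Sym2 V} {a b x y : V}

instance : Std.Symm (Adj ends) :=
  ⟨fun _ _ ⟨i, hi⟩ => ⟨i, hi.trans Sym2.eq_swap⟩⟩

lemma reach_symm (h : Reach ends a b) : Reach ends b a :=
  symm_of (Relation.ReflTransGen (Adj ends)) h

lemma reach_of_mem {i : Fin n} (hx : x ∈ ends i) (hy : y ∈ ends i) : Reach ends x y := by
  by_cases hxy : x = y
  · exact hxy ▸ .refl
  · exact .single ⟨i, (Sym2.mem_and_mem_iff hxy).1 ⟨hx, hy⟩⟩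

variable (ends) in
def reachSetoid : Setoid V where
  r := Reach ends
  iseqv := ⟨fun _ => .refl, reach_symm, .trans⟩

variable (ends) in
def componentVerts (a : V) : Set V := {b | Reach ends a b}

variable (ends) in
def componentEdges (a : V) : Set (Fin n) := {i | ∀ x ∈ ends i, Reach ends a x}

lemma mem_componentEdges_iff {i : Fin n} (hx : x ∈ ends i) :
    i ∈ componentEdges ends a ↔ Reach ends a x :=
  ⟨fun h => h x hx, fun h _ hy => h.trans (reach_of_mem hx hy)⟩

lemma componentVerts_eq (h : Reach ends a b) : componentVerts ends a = componentVerts ends b :=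
  Set.ext fun _ => ⟨(reach_symm h).trans, h.trans⟩

lemma componentEdges_eq (h : Reach ends a b) : componentEdges ends a = componentEdges ends b :=
  Set.ext fun _ => forall₂_congr fun _ _ => ⟨(reach_symm h).trans, h.trans⟩

variable (ends) in
def ReachIn : ℕ → V → V → Prop
  | 0 => fun a b => a = b
  | k + 1 => fun a b => ∃ c, ReachIn k a c ∧ Adj ends c b

lemma exists_reachIn (h : Reach ends a b) : ∃ k, ReachIn ends k a b := by
  induction h with
  | refl => exact ⟨0, rfl⟩
  | tail _ hadj ih =>
    obtain ⟨k, hk⟩ := ih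
    exact ⟨k + 1, _, hk, hadj⟩

structure SpanningTree (ends : Fin n → Sym2 V) (a : V) where
  depth : V → ℕ
  parent : V → V
  parentEdge : V → Fin n
  depth_root : depth a = 0
  ends_parentEdge : ∀ b, Reach ends a b → b ≠ a → ends (parentEdge b) = s(b, parent b)
  depth_parent_lt : ∀ b, Reach ends a b → b ≠ a → depth (parent b) < depth b

namespace SpanningTree

variable (ends a) in
lemma nonempty [Nonempty (Fin n)] : Nonempty (SpanningTree ends a) := by
  have : Nonempty V := ⟨a⟩
  let depth (b : V) : ℕ := sInf {k | ReachIn ends k a b}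
  have step : ∀ b, Reach ends a b → b ≠ a →
      ∃ c i, ends i = s(b, c) ∧ depth c < depth b := by
    intro b hb hba
    obtain ⟨k, hk⟩ := exists_reachIn hb
    have hmin : ReachIn ends (depth b) a b := Nat.sInf_mem (s := {k | ReachIn ends k a b}) ⟨k, hk⟩
    rcases hdb : depth b with _ | m
    · rw [hdb] at hmin
      exact absurd hmin.symm hba
    · rw [hdb] at hmin
      obtain ⟨c, hc, i, hi⟩ := hmin
      exact ⟨c, i, hi.trans Sym2.eq_swap, Nat.lt_succ_of_le (Nat.sInf_le hc)⟩
  choose! parent parentEdge hends hlt using step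
  exact ⟨⟨depth, parent, parentEdge, Nat.eq_zero_of_le_zero (Nat.sInf_le rfl), hends, hlt⟩⟩

variable (T : SpanningTree ends a)

lemma reach_parent (hb : Reach ends a b) (hba : b ≠ a) : Reach ends a (T.parent b) :=
  hb.trans <| reach_of_mem (i := T.parentEdge b)
    (by rw [T.ends_parentEdge b hb hba]; exact Sym2.mem_mk_left _ _)
    (by rw [T.ends_parentEdge b hb hba]; exact Sym2.mem_mk_right _ _)

lemma parentEdge_mem (hb : Reach ends a b) (hba : b ≠ a) :
    T.parentEdge b ∈ componentEdges ends a :=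
  (mem_componentEdges_iff (by rw [T.ends_parentEdge b hb hba]; exact Sym2.mem_mk_left _ _)).2 hb

lemma eq_of_ends_parentEdge (hb : Reach ends a b) (hba : b ≠ a)
    (h : ends (T.parentEdge b) = s(x, y)) (hxy : T.depth y ≤ T.depth x) :
    b = x ∧ T.parent b = y := by
  rw [T.ends_parentEdge b hb hba, Sym2.eq_iff] at h
  rcases h with h | ⟨rfl, rfl⟩
  · exact h
  · exact absurd (T.depth_parent_lt _ hb hba) (not_lt.2 hxy)

lemma injOn_parentEdge : Set.InjOn T.parentEdge (componentVerts ends a \ {a}) := by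
  rintro b₁ ⟨hb₁, hb₁a⟩ b₂ ⟨hb₂, hb₂a⟩ h
  exact (T.eq_of_ends_parentEdge hb₂ hb₂a (h ▸ T.ends_parentEdge b₁ hb₁ hb₁a)
    (T.depth_parent_lt b₁ hb₁ hb₁a).le).1.symm

lemma exists_parentEdge_eq [Finite V]
    (hcard : (componentVerts ends a).ncard = (componentEdges ends a).ncard + 1)
    {i : Fin n} (hi : i ∈ componentEdges ends a) :
    ∃ b, Reach ends a b ∧ b ≠ a ∧ T.parentEdge b = i := by
  have hroot : a ∈ componentVerts ends a := Relation.ReflTransGen.refl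
  obtain ⟨b, hb, hbi⟩ := Set.surj_on_of_inj_on_of_ncard_le (fun b _ => T.parentEdge b)
    (fun b hb => T.parentEdge_mem hb.1 hb.2) (fun _ _ h₁ h₂ h => T.injOn_parentEdge h₁ h₂ h)
    (by rw [Set.ncard_sdiff_singleton_of_mem hroot]; omega) (Set.toFinite _) i hi
  exact ⟨b, hb.1, hb.2, hbi.symm⟩

def transport {X : Type*} (t : X) (step : V → X → X) (b : V) : X :=
  if T.depth (T.parent b) < T.depth b then step b (transport t step (T.parent b)) else t
termination_by T.depth b

lemma transport_root {X : Type*} (t : X) (step : V → X → X) : T.transport t step a = t := by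
  rw [transport, if_neg (by rw [T.depth_root]; exact Nat.not_lt_zero _)]

lemma transport_of_ne {X : Type*} (t : X) (step : V → X → X) (hb : Reach ends a b)
    (hba : b ≠ a) : T.transport t step b = step b (T.transport t step (T.parent b)) := by
  rw [transport, if_pos (T.depth_parent_lt b hb hba)]

end SpanningTree

variable [Finite V]

variable (ends a) in
lemma ncard_componentVerts_le [Nonempty (Fin n)] :
    (componentVerts ends a).ncard ≤ (componentEdges ends a).ncard + 1 := by
  obtain ⟨T⟩ := SpanningTree.nonempty ends a
  have hroot : a ∈ componentVerts ends a := Relation.ReflTransGen.refl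
  have := Set.ncard_le_ncard_of_injOn T.parentEdge (fun b hb => T.parentEdge_mem hb.1 hb.2)
    T.injOn_parentEdge
  rw [← Set.ncard_sdiff_singleton_add_one hroot]
  omega

lemma not_hasCycleWithin_of_ncard_eq [Nonempty (Fin n)]
    (hcard : (componentVerts ends a).ncard = (componentEdges ends a).ncard + 1) :
    ¬ HasCycleWithin ends (Reach ends a) := by
  rintro ⟨m, e, v, he, -, hev, hv⟩
  obtain ⟨T⟩ := SpanningTree.nonempty ends a
  obtain ⟨K, hK⟩ := Finite.exists_max fun k => T.depth (v k)
  have parent_edge : ∀ j k, ends (e j) = s(v K, v k) →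
      e j = T.parentEdge (v K) ∧ T.depth (v k) < T.depth (v K) := by
    intro j k hjk
    obtain ⟨b, hb, hba, hbj⟩ := T.exists_parentEdge_eq hcard
      ((mem_componentEdges_iff (by rw [hjk]; exact Sym2.mem_mk_left _ _)).2 (hv K))
    obtain ⟨rfl, hp⟩ := T.eq_of_ends_parentEdge hb hba (hbj ▸ hjk) (hK k)
    exact ⟨hbj.symm, hp ▸ T.depth_parent_lt _ hb hba⟩
  have hnext := parent_edge K (K + 1) (hev K)
  have hprev := parent_edge (K - 1) (K - 1) (by rw [hev, sub_add_cancel, Sym2.eq_swap])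
  -- both cycle edges at `v K` are its parent edge, so the cycle is a loop at `v K`
  have hK1 : K + 1 = K := by
    conv_lhs => rw [he (hnext.1.trans hprev.1.symm)]
    exact sub_add_cancel K 1
  exact (hK1 ▸ hnext.2).false

lemma ncard_componentVerts_eq_of_forall_le [Nonempty (Fin n)] (hV : Nat.card V = n + 1) (a₀ : V)
    (h : ∀ a, ¬ Reach ends a₀ a → (componentVerts ends a).ncard ≤ (componentEdges ends a).ncard) :
    (componentVerts ends a₀).ncard = (componentEdges ends a₀).ncard + 1 ∧
      ∀ a, ¬ Reach ends a₀ a →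
        (componentVerts ends a).ncard = (componentEdges ends a).ncard := by
  classical
  let S := reachSetoid ends
  have : Fintype (Quotient S) := Fintype.ofFinite _
  let cv : Quotient S → ℕ := Quotient.lift (fun a => (componentVerts ends a).ncard)
    fun _ _ hab => by rw [componentVerts_eq hab]
  let ce : Quotient S → ℕ := Quotient.lift (fun a => (componentEdges ends a).ncard)
    fun _ _ hab => by rw [componentEdges_eq hab]
  have hcv : ∀ q, cv q = Nat.card {b // Quotient.mk S b = q} := by
    refine Quotient.ind fun a => Nat.card_congr <| Equiv.subtypeEquivRight fun b => ?_
    exact ⟨fun h => Quotient.sound (reach_symm h), fun h => reach_symm (Quotient.exact h)⟩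
  have hce : ∀ q, ce q = Nat.card {i // Quotient.mk S (ends i).out.1 = q} := by
    refine Quotient.ind fun a => Nat.card_congr <| Equiv.subtypeEquivRight fun i => ?_
    rw [mem_componentEdges_iff (Sym2.out_fst_mem _)]
    exact ⟨fun h => Quotient.sound (reach_symm h), fun h => reach_symm (Quotient.exact h)⟩
  have hsum_v : ∑ q, cv q = n + 1 := by
    simp_rw [hcv]
    rw [← Nat.card_sigma, Nat.card_congr (Equiv.sigmaFiberEquiv _), hV]
  have hsum_e : ∑ q, ce q = n := by
    simp_rw [hce]
    rw [← Nat.card_sigma, Nat.card_congr (Equiv.sigmaFiberEquiv _), Nat.card_fin]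
  have hne : ∀ {a}, ¬ Reach ends a₀ a → Quotient.mk S a ≠ Quotient.mk S a₀ :=
    fun ha h => ha (reach_symm (Quotient.exact h))
  obtain ⟨h₀, hrest⟩ := Finset.eq_add_one_and_eq_of_sum_eq_sum_add_one (f := cv) (g := ce)
    (Finset.mem_univ (Quotient.mk S a₀)) (by omega) (ncard_componentVerts_le ends a₀)
    (Quotient.ind fun a _ ha => h a fun h' => ha (Quotient.sound (reach_symm h')))
  exact ⟨h₀, fun a ha => hrest _ (Finset.mem_univ _) (hne ha)⟩

end MGraph

namespace MGraph

variable {V : Type*} [Finite V] {n : ℕ} [Nonempty (Fin n)] {u v : Fin n → V} {a : V}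

theorem exists_solution_of_ncard_eq {G H : Type*} [MulOneClass G] [MulOneClass H]
    (α β : Fin n → G →* H)
    (hcard : (componentVerts (fun i => s(u i, v i)) a).ncard =
      (componentEdges (fun i => s(u i, v i)) a).ncard + 1)
    (hα : ∀ i ∈ componentEdges (fun i => s(u i, v i)) a, Function.Surjective (α i))
    (hβ : ∀ i ∈ componentEdges (fun i => s(u i, v i)) a, Function.Surjective (β i)) (t : G) :
    ∃ y : V → G, y a = t ∧ (∀ b, ¬ Reach (fun i => s(u i, v i)) a b → y b = 1) ∧
      ∀ i, α i (y (u i)) = β i (y (v i)) := by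
  classical
  obtain ⟨T⟩ := SpanningTree.nonempty (fun i => s(u i, v i)) a
  let step (b : V) (z : G) : G :=
    if u (T.parentEdge b) = b then Function.invFun (α (T.parentEdge b)) (β (T.parentEdge b) z)
    else Function.invFun (β (T.parentEdge b)) (α (T.parentEdge b) z)
  let x := T.transport t step
  refine ⟨fun b => if Reach _ a b then x b else 1, if_pos .refl |>.trans (T.transport_root t step),
    fun b hb => if_neg hb, fun i => ?_⟩
  dsimp only
  by_cases hi : i ∈ componentEdges (fun i => s(u i, v i)) a
  · obtain ⟨b, hb, hba, rfl⟩ := T.exists_parentEdge_eq hcard hi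
    have hxb : x b = step b (x (T.parent b)) := T.transport_of_ne t step hb hba
    simp only [step] at hxb
    rcases Sym2.eq_iff.1 (T.ends_parentEdge b hb hba) with ⟨hu, hv⟩ | ⟨hu, hv⟩
    · rw [hu, hv, if_pos hb, if_pos (T.reach_parent hb hba), hxb, if_pos hu]
      exact Function.rightInverse_invFun (hα _ hi) _
    · have hne : u (T.parentEdge b) ≠ b := hu ▸ fun h => (T.depth_parent_lt b hb hba).ne (congrArg T.depth h)
      rw [hu, hv, if_pos hb, if_pos (T.reach_parent hb hba), hxb, if_neg hne]
      exact (Function.rightInverse_invFun (hβ _ hi) _).symm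
  · have hout : ∀ w ∈ s(u i, v i), ¬ Reach _ a w :=
      fun w hw h => hi ((mem_componentEdges_iff hw).2 h)
    simp only [if_neg (hout _ (Sym2.mem_mk_left _ _)), if_neg (hout _ (Sym2.mem_mk_right _ _)),
      map_one]

end MGraph

lemma End0Data.apply_eq {n : ℕ} {T : Type*} [Group T] {θ : Fin n → Option (Fin n)}
    {φ : Fin n → (T →* T)} {f : (Fin n → T) →* (Fin n → T)} (h : End0Data θ φ f)
    (x : Fin n → T) (i : Fin n) : f x i = φ i ((θ i).elim 1 x) := by
  rw [h.2]
  cases θ i <;> simp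

open MGraph in
lemma ncard_componentVerts_le_of_fixedPointFree {n : ℕ} [Nonempty (Fin n)] {T : Type*} [Group T]
    [Nontrivial T] {f g : (Fin n → T) →* (Fin n → T)} {θf θg : Fin n → Option (Fin n)}
    {φf φg : Fin n → (T →* T)} (hf : End0Data θf φf f) (hg : End0Data θg φg g)
    (hfpf : ∀ σ : Fin n → T, f σ = g σ ↔ σ = 1) {a : Option (Fin n)}
    (ha : ¬ Reach (fun i => s(θf i, θg i)) none a) :
    (componentVerts (fun i => s(θf i, θg i)) a).ncard ≤
      (componentEdges (fun i => s(θf i, θg i)) a).ncard := by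
  by_contra hlt
  have hcard := le_antisymm (ncard_componentVerts_le (fun i => s(θf i, θg i)) a) (by omega)
  have ne_none : ∀ o, Reach (fun i => s(θf i, θg i)) a o → o ≠ none :=
    fun o ho h => ha (h ▸ reach_symm ho)
  obtain ⟨t, ht⟩ := exists_ne (1 : T)
  obtain ⟨y, hya, hy1, hy⟩ := exists_solution_of_ncard_eq φf φg hcard
    (fun i hi => (hf.1 i (Option.isSome_iff_ne_none.2
      (ne_none _ (hi _ (Sym2.mem_mk_left _ _))))).2)
    (fun i hi => (hg.1 i (Option.isSome_iff_ne_none.2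
      (ne_none _ (hi _ (Sym2.mem_mk_right _ _))))).2) t
  have hy_elim : ∀ o, o.elim 1 (fun j => y (some j)) = y o := by
    rintro (_ | j)
    exacts [(hy1 none fun h => ha (reach_symm h)).symm, rfl]
  have hfix := (hfpf fun j => y (some j)).1 <| funext fun i => by
    rw [hf.apply_eq, hg.apply_eq, hy_elim, hy_elim, hy i]
  obtain ⟨j, rfl⟩ := Option.ne_none_iff_exists'.1 (ne_none a .refl)
  exact ht (hya ▸ congrFun hfix j)

theorem component_structure_of_fixed_point_free_general
    (n : ℕ) (hn : 1 ≤ n) (T : Type*) [Group T] [Nontrivial T]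
    (f g : (Fin n → T) →* (Fin n → T))
    (θf θg : Fin n → Option (Fin n)) (φf φg : Fin n → (T →* T))
    (hf : End0Data θf φf f) (hg : End0Data θg φg g)
    (hfpf : ∀ σ : Fin n → T, f σ = g σ ↔ σ = 1) :
    MGraph.ComponentIsTree (fun i => s(θf i, θg i)) (none : Option (Fin n)) ∧
      ∀ a : Option (Fin n),
        ¬ MGraph.Reach (fun i => s(θf i, θg i)) none a →
        Nat.card {i : Fin n //
            ∀ x ∈ s(θf i, θg i), MGraph.Reach (fun j => s(θf j, θg j)) a x} =
          Nat.card {b : Option (Fin n) //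
            MGraph.Reach (fun j => s(θf j, θg j)) a b} := by
  have : Nonempty (Fin n) := ⟨⟨0, hn⟩⟩
  obtain ⟨htree, hcomp⟩ := MGraph.ncard_componentVerts_eq_of_forall_le
    (ends := fun i => s(θf i, θg i)) (by simp) none
    fun a ha => ncard_componentVerts_le_of_fixedPointFree hf hg hfpf ha
  exact ⟨⟨fun b c hb hc => (MGraph.reach_symm hb).trans hc,
    MGraph.not_hasCycleWithin_of_ncard_eq htree⟩, fun a ha => (hcomp a ha).symm⟩

theorem component_structure_of_fixed_point_free
    (n : ℕ) (hn : 1 ≤ n) (T : Type*) [Group T] [Finite T] [Nontrivial T]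
    (f g : (Fin n → T) →* (Fin n → T))
    (θf θg : Fin n → Option (Fin n)) (φf φg : Fin n → (T →* T))
    (hf : End0Data θf φf f) (hg : End0Data θg φg g)
    (hfpf : ∀ σ : Fin n → T, f σ = g σ ↔ σ = 1) :
    MGraph.ComponentIsTree (fun i => s(θf i, θg i)) (none : Option (Fin n)) ∧
      ∀ a : Option (Fin n),
        ¬ MGraph.Reach (fun i => s(θf i, θg i)) none a →
        Nat.card {i : Fin n //
            ∀ x ∈ s(θf i, θg i), MGraph.Reach (fun j => s(θf j, θg j)) a x} =
          Nat.card {b : Option (Fin n) //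
            MGraph.Reach (fun j => s(θf j, θg j)) a b} :=
  component_structure_of_fixed_point_free_general n hn T f g θf θg φf φg hf hg hfpf
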